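/- (Gradient with respect to β for approach 1.) In the reparametrized GLMM, with η_i = X_i β + Z_i b_i, b_i = L_i b̃_i + λ_i, Λ_i = L_i L_i^T = (Ω + Z_i^T H_i(η̂_i) Z_i)^{−1}, λ_i = Λ_i Z_i^T { y_i − g_i(η̂_i) + H_i(η̂_i)(η̂_i − X_i β) } with η̂_i ∈ ℝ^{n_i} fixed, a_i = Z_i^T (y_i − g_i(η_i)) − Ω b_i, and prior β ~ N(0, σ_β² I_p), the gradient of the reparametrized log joint density ℓ(θ̃) with respect to β equals Σ_{i=1}^n X_i^T { y_i − g_i(η_i) − H_i(η̂_i) Z_i Λ_i a_i } − β/σ_β². -/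

import Mathlib

/-!
With `η̂ᵢ` fixed, `λᵢ` and hence `bᵢ` and `ηᵢ` are affine in `β`:
`bᵢ(β) = dᵢ − Nᵢ β` and `ηᵢ(β) = Zᵢ dᵢ + (Xᵢ − Zᵢ Nᵢ) β` with `Nᵢ = Λᵢ Zᵢᵀ Hᵢ(η̂ᵢ) Xᵢ`, while
`log |Lᵢ|` does not depend on `β`. By the chain rule through these affine maps, the gradient of the
`i`-th term is `(Xᵢ − Zᵢ Nᵢ)ᵀ (yᵢ − gᵢ(ηᵢ)) + Nᵢᵀ Ω bᵢ`, and the symmetry of `Hᵢ(η̂ᵢ)` and `Λᵢ`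
regroups this as `Xᵢᵀ (yᵢ − gᵢ(ηᵢ) − Hᵢ(η̂ᵢ) Zᵢ Λᵢ aᵢ)`.
-/

open Matrix

/-- The continuous linear map `v ↦ a ⬝ᵥ v`. -/
noncomputable def dotCLM {ι : Type*} [Fintype ι] (a : ι → ℝ) : (ι → ℝ) →L[ℝ] ℝ :=
  LinearMap.toContinuousLinearMap
    { toFun := fun v => a ⬝ᵥ v
      map_add' := fun x y => dotProduct_add a x y
      map_smul' := fun c x => by simp [dotProduct_smul] }

section DotCLM

variable {ι : Type*} [Fintype ι]

@[simp] lemma dotCLM_apply (a v : ι → ℝ) : dotCLM a v = a ⬝ᵥ v := rfl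

lemma dotCLM_add (a b : ι → ℝ) : dotCLM (a + b) = dotCLM a + dotCLM b :=
  ContinuousLinearMap.ext fun v => add_dotProduct a b v

lemma dotCLM_sub (a b : ι → ℝ) : dotCLM (a - b) = dotCLM a - dotCLM b :=
  ContinuousLinearMap.ext fun v => sub_dotProduct a b v

lemma dotCLM_smul (c : ℝ) (a : ι → ℝ) : dotCLM (c • a) = c • dotCLM a :=
  ContinuousLinearMap.ext fun v => smul_dotProduct c a v

lemma dotCLM_sum {κ : Type*} (s : Finset κ) (f : κ → ι → ℝ) :
    dotCLM (∑ k ∈ s, f k) = ∑ k ∈ s, dotCLM (f k) :=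
  ContinuousLinearMap.ext fun v => by simp [sum_dotProduct]

end DotCLM

section Derivatives

variable {ι κ : Type*} [Fintype ι] [Fintype κ]

lemma hasFDerivAt_sum_apply {f : ι → ℝ → ℝ} {f' u : ι → ℝ}
    (hf : ∀ j, HasDerivAt (f j) (f' j) (u j)) :
    HasFDerivAt (fun v : ι → ℝ => ∑ j, f j (v j)) (dotCLM f') u := by
  have H := HasFDerivAt.fun_sum fun j (_ : j ∈ Finset.univ) =>
    (hf j).comp_hasFDerivAt u (hasFDerivAt_apply (𝕜 := ℝ) j u)
  refine H.congr_fderiv (ContinuousLinearMap.ext fun v => ?_)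
  simp [dotProduct]

lemma hasFDerivAt_dotProduct_mulVec_self (S : Matrix ι ι ℝ) (u : ι → ℝ) :
    HasFDerivAt (fun v => v ⬝ᵥ (S *ᵥ v)) (dotCLM ((S + Sᵀ) *ᵥ u)) u := by
  have hS : HasFDerivAt (fun v => S *ᵥ v) (LinearMap.toContinuousLinearMap S.mulVecLin) u :=
    (LinearMap.toContinuousLinearMap S.mulVecLin).hasFDerivAt
  have H := HasFDerivAt.fun_sum fun j (_ : j ∈ Finset.univ) =>
    (hasFDerivAt_apply j u).mul ((hasFDerivAt_apply j (S *ᵥ u)).comp u hS)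
  refine H.congr_fderiv (ContinuousLinearMap.ext fun v => ?_)
  rw [dotCLM_apply, add_mulVec, add_dotProduct, mulVec_transpose, ← dotProduct_mulVec, add_comm]
  simp [dotProduct, Finset.sum_add_distrib]

lemma HasFDerivAt.comp_affine_mulVec {F : (ι → ℝ) → ℝ} {g : ι → ℝ} (d : ι → ℝ)
    (A : Matrix ι κ ℝ) {x : κ → ℝ} (hF : HasFDerivAt F (dotCLM g) (d + A *ᵥ x)) :
    HasFDerivAt (fun x => F (d + A *ᵥ x)) (dotCLM (Aᵀ *ᵥ g)) x := by
  have hA : HasFDerivAt (fun x => d + A *ᵥ x) (LinearMap.toContinuousLinearMap A.mulVecLin) x :=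
    (LinearMap.toContinuousLinearMap A.mulVecLin).hasFDerivAt.const_add d
  refine (hF.comp x hA).congr_fderiv (ContinuousLinearMap.ext fun v => ?_)
  simp [dotProduct_mulVec, mulVec_transpose]

lemma hasFDerivAt_neg_dotProduct_self_div (σ : ℝ) (u : ι → ℝ) :
    HasFDerivAt (fun v => -(v ⬝ᵥ v) / (2 * σ)) (dotCLM (-(1 / σ) • u)) u := by
  have H : HasFDerivAt (fun v : ι → ℝ => ∑ j, -(v j * v j) / (2 * σ)) (dotCLM (-(1 / σ) • u)) u :=
    hasFDerivAt_sum_apply fun j =>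
      (((hasDerivAt_id _).mul (hasDerivAt_id _)).neg.div_const (2 * σ)).congr_deriv (by
        simp only [id, Pi.smul_apply, smul_eq_mul]
        ring)
  refine H.congr_of_eventuallyEq (.of_forall fun v => ?_)
  simp only [dotProduct, ← Finset.sum_neg_distrib, Finset.sum_div]

end Derivatives

lemma Matrix.IsSymm.transpose_mul_mul {α m n : Type*} [Fintype m] [CommSemiring α]
    {H : Matrix m m α} (hH : H.IsSymm) (Z : Matrix m n α) : (Zᵀ * H * Z).IsSymm := by
  simp [Matrix.IsSymm, transpose_mul, hH.eq, Matrix.mul_assoc]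

lemma transpose_mulVec_reparam {ι κ ρ α : Type*} [Fintype ι] [Fintype ρ] [CommRing α]
    (X : Matrix ι κ α) (Z : Matrix ι ρ α) {H : Matrix ι ι α} {Λ : Matrix ρ ρ α} (hH : H.IsSymm)
    (hΛ : Λ.IsSymm) (Ω : Matrix ρ ρ α) (w : ι → α) (b : ρ → α) :
    (X - Z * (Λ * Zᵀ * H * X))ᵀ *ᵥ w + (Λ * Zᵀ * H * X)ᵀ *ᵥ (Ω *ᵥ b)
      = Xᵀ *ᵥ (w - H *ᵥ (Z *ᵥ (Λ *ᵥ (Zᵀ *ᵥ w - Ω *ᵥ b)))) := by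
  simp only [transpose_sub, transpose_mul, transpose_transpose, hH.eq, hΛ.eq, sub_mulVec,
    mulVec_sub, ← mulVec_mulVec]
  abel

section Reparametrization

variable {ι κ ρ : Type*} [Fintype ι] [Fintype κ] [Fintype ρ]

lemma hasFDerivAt_reparam_logDensity (y g : ι → ℝ) {h : ι → ℝ → ℝ} (X : Matrix ι κ ℝ)
    (Z : Matrix ι ρ ℝ) {H : Matrix ι ι ℝ} {Λ Ω : Matrix ρ ρ ℝ} (hH : H.IsSymm) (hΛ : Λ.IsSymm)
    (hΩ : Ω.IsSymm) (d : ρ → ℝ) {b : (κ → ℝ) → ρ → ℝ}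
    (hb : ∀ x, b x = d - Λ *ᵥ (Zᵀ *ᵥ (H *ᵥ (X *ᵥ x)))) {η : (κ → ℝ) → ι → ℝ}
    (hη : ∀ x, η x = X *ᵥ x + Z *ᵥ b x) {x₀ : κ → ℝ}
    (hder : ∀ j, HasDerivAt (h j) (g j) (η x₀ j)) :
    HasFDerivAt (fun x => ∑ j, (y j * η x j - h j (η x j)) - 1 / 2 * (b x ⬝ᵥ (Ω *ᵥ b x)))
      (dotCLM (Xᵀ *ᵥ (y - g - H *ᵥ (Z *ᵥ (Λ *ᵥ (Zᵀ *ᵥ (y - g) - Ω *ᵥ b x₀)))))) x₀ := by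
  set N := Λ * Zᵀ * H * X
  have hb_affine : b = fun x => d + (-N) *ᵥ x := funext fun x => by
    simp [hb, N, neg_mulVec, ← mulVec_mulVec, sub_eq_add_neg]
  have hη_affine : η = fun x => Z *ᵥ d + (X - Z * N) *ᵥ x := funext fun x => by
    simp only [hη, hb_affine, mulVec_add, sub_mulVec, ← mulVec_mulVec, neg_mulVec, mulVec_neg]
    abel
  have hlik : HasFDerivAt (fun x => ∑ j, (y j * η x j - h j (η x j)))
      (dotCLM ((X - Z * N)ᵀ *ᵥ (y - g))) x₀ := by
    rw [hη_affine] at hder ⊢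
    refine HasFDerivAt.comp_affine_mulVec (F := fun u => ∑ j, (y j * u j - h j (u j))) _ _ ?_
    exact hasFDerivAt_sum_apply fun j => by
      simpa using ((hasDerivAt_id _).const_mul (y j)).sub (hder j)
  have hquad : HasFDerivAt (fun x => b x ⬝ᵥ (Ω *ᵥ b x))
      (dotCLM ((-N)ᵀ *ᵥ ((Ω + Ωᵀ) *ᵥ b x₀))) x₀ := by
    rw [hb_affine]
    exact (hasFDerivAt_dotProduct_mulVec_self Ω _).comp_affine_mulVec _ _
  refine (hlik.sub (hquad.const_mul (1 / 2))).congr_fderiv ?_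
  rw [← dotCLM_smul, ← dotCLM_sub, ← transpose_mulVec_reparam X Z hH hΛ]
  congr 1
  rw [hΩ.eq, transpose_neg, neg_mulVec, add_mulVec, mulVec_add]
  module

end Reparametrization

theorem gradient_beta_approach1_general
    (n p r : ℕ) (ni : Fin n → ℕ)
    (y : (i : Fin n) → Fin (ni i) → ℝ)
    (X : (i : Fin n) → Matrix (Fin (ni i)) (Fin p) ℝ)
    (Z : (i : Fin n) → Matrix (Fin (ni i)) (Fin r) ℝ)
    (h h1 h2 : (i : Fin n) → Fin (ni i) → ℝ → ℝ)
    (hder : ∀ i j x, HasDerivAt (h i j) (h1 i j x) x)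
    (Ω : Matrix (Fin r) (Fin r) ℝ) (hΩsym : Ωᵀ = Ω)
    (σβ2 : ℝ)
    (ηhat : (i : Fin n) → Fin (ni i) → ℝ)
    (gv : (i : Fin n) → (Fin (ni i) → ℝ) → Fin (ni i) → ℝ)
    (hgv : ∀ i η j, gv i η j = h1 i j (η j))
    (Hm : (i : Fin n) → (Fin (ni i) → ℝ) → Matrix (Fin (ni i)) (Fin (ni i)) ℝ)
    (hHm : ∀ i η, Hm i η = Matrix.diagonal fun j => h2 i j (η j))
    (Lam : Fin n → Matrix (Fin r) (Fin r) ℝ)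
    (hLam : ∀ i, Lam i = (Ω + (Z i)ᵀ * Hm i (ηhat i) * Z i)⁻¹)
    (L : Fin n → Matrix (Fin r) (Fin r) ℝ)
    (btil : Fin n → Fin r → ℝ)
    (lam : (Fin p → ℝ) → Fin n → Fin r → ℝ)
    (hlam : ∀ β i, lam β i = Lam i *ᵥ ((Z i)ᵀ *ᵥ
      (y i - gv i (ηhat i) + Hm i (ηhat i) *ᵥ (ηhat i - X i *ᵥ β))))
    (b : (Fin p → ℝ) → Fin n → Fin r → ℝ)
    (hb : ∀ β i, b β i = L i *ᵥ btil i + lam β i)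
    (η : (Fin p → ℝ) → (i : Fin n) → Fin (ni i) → ℝ)
    (hη : ∀ β i, η β i = X i *ᵥ β + Z i *ᵥ b β i)
    (c0 : ℝ) (c : Fin n → ℝ)
    (ℓ : (Fin p → ℝ) → ℝ)
    (hℓ : ∀ β, ℓ β = -(β ⬝ᵥ β) / (2 * σβ2) + c0
      + ∑ i, ((∑ j, (y i j * η β i j - h i j (η β i j)))
          + (1 / 2) * Real.log Ω.det - (1 / 2) * (b β i ⬝ᵥ (Ω *ᵥ b β i))
          + Real.log |(L i).det| + c i))
    (β0 : Fin p → ℝ)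
    (a : Fin n → Fin r → ℝ)
    (ha : ∀ i, a i = (Z i)ᵀ *ᵥ (y i - gv i (η β0 i)) - Ω *ᵥ b β0 i) :
    HasFDerivAt ℓ
      (dotCLM ((∑ i, (X i)ᵀ *ᵥ
          (y i - gv i (η β0 i) - Hm i (ηhat i) *ᵥ (Z i *ᵥ (Lam i *ᵥ a i))))
        - (1 / σβ2) • β0))
      β0 := by
  have hH : ∀ i, (Hm i (ηhat i)).IsSymm := fun i => hHm i _ ▸ isSymm_diagonal _
  have hΛ : ∀ i, (Lam i).IsSymm := fun i =>
    hLam i ▸ (IsSymm.add hΩsym ((hH i).transpose_mul_mul (Z i))).inv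
  have hb_affine : ∀ i β, b β i = (L i *ᵥ btil i + Lam i *ᵥ ((Z i)ᵀ *ᵥ
      (y i - gv i (ηhat i) + Hm i (ηhat i) *ᵥ ηhat i)))
        - Lam i *ᵥ ((Z i)ᵀ *ᵥ (Hm i (ηhat i) *ᵥ (X i *ᵥ β))) := fun i β => by
    simp only [hb, hlam, mulVec_add, mulVec_sub]
    abel
  have hgroup : ∀ i, HasFDerivAt (fun β => (∑ j, (y i j * η β i j - h i j (η β i j)))
      + 1 / 2 * Real.log Ω.det - 1 / 2 * (b β i ⬝ᵥ (Ω *ᵥ b β i)) + Real.log |(L i).det| + c i)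
      (dotCLM ((X i)ᵀ *ᵥ
        (y i - gv i (η β0 i) - Hm i (ηhat i) *ᵥ (Z i *ᵥ (Lam i *ᵥ a i))))) β0 := fun i => by
    rw [ha]
    refine ((hasFDerivAt_reparam_logDensity (y i) (gv i (η β0 i)) (X i) (Z i) (hH i) (hΛ i)
      hΩsym _ (hb_affine i) (hη · i) fun j => hgv i _ j ▸ hder i j _).add_const
      (1 / 2 * Real.log Ω.det + Real.log |(L i).det| + c i)).congr_of_eventuallyEq
      (.of_forall fun β => by ring)
  rw [show ℓ = _ from funext hℓ]
  have hsum := HasFDerivAt.fun_sum fun i (_ : i ∈ Finset.univ) => hgroup i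
  refine (((hasFDerivAt_neg_dotProduct_self_div σβ2 β0).add_const c0).add hsum).congr_fderiv ?_
  rw [← dotCLM_sum, ← dotCLM_add, neg_smul, sub_eq_add_neg, add_comm]

/-- **Gradient of the reparametrized GLMM log joint density with respect to `β`,
approach 1 (Lemma 3, first part).** Here `h i j` is the log-partition function of
`y_{ij}` with derivatives `h1 i j` and `h2 i j ≥ 0`, `η̂_i` is fixed,
`Λ_i = (Ω + Z_iᵀ H_i(η̂_i) Z_i)⁻¹`, `λ_i(β) = Λ_i Z_iᵀ{y_i − g_i(η̂_i) + H_i(η̂_i)(η̂_i − X_iβ)}`,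
`L_i L_iᵀ = Λ_i` (Cholesky), `b_i(β) = L_i b̃_i + λ_i(β)`, `η_i(β) = X_iβ + Z_i b_i(β)`,
`a_i = Z_iᵀ(y_i − g_i(η_i)) − Ω b_i`, the prior on `β` is `N(0, σβ² I_p)`, and the
reparametrized log joint density is
`ℓ(β) = −βᵀβ/(2σβ²) + c0 + Σᵢ { Σⱼ (y_{ij}η_{ij} − h_{ij}(η_{ij})) + (1/2)log|Ω|
  − (1/2)b_iᵀΩb_i + log|L_i| + c_i }`. Then
`∇_β ℓ = Σᵢ X_iᵀ{y_i − g_i(η_i) − H_i(η̂_i) Z_i Λ_i a_i} − β/σβ²`. -/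
theorem gradient_beta_approach1
    (n p r : ℕ) (ni : Fin n → ℕ)
    (y : (i : Fin n) → Fin (ni i) → ℝ)
    (X : (i : Fin n) → Matrix (Fin (ni i)) (Fin p) ℝ)
    (Z : (i : Fin n) → Matrix (Fin (ni i)) (Fin r) ℝ)
    (h h1 h2 : (i : Fin n) → Fin (ni i) → ℝ → ℝ)
    (hder : ∀ i j x, HasDerivAt (h i j) (h1 i j x) x)
    (hnn : ∀ i j x, 0 ≤ h2 i j x)
    (Ω : Matrix (Fin r) (Fin r) ℝ) (hΩsym : Ωᵀ = Ω) (hΩ : Ω.PosDef)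
    (σβ2 : ℝ) (hσ : 0 < σβ2)
    (ηhat : (i : Fin n) → Fin (ni i) → ℝ)
    (gv : (i : Fin n) → (Fin (ni i) → ℝ) → Fin (ni i) → ℝ)
    (hgv : ∀ i η j, gv i η j = h1 i j (η j))
    (Hm : (i : Fin n) → (Fin (ni i) → ℝ) → Matrix (Fin (ni i)) (Fin (ni i)) ℝ)
    (hHm : ∀ i η, Hm i η = Matrix.diagonal fun j => h2 i j (η j))
    (Lam : Fin n → Matrix (Fin r) (Fin r) ℝ)
    (hLam : ∀ i, Lam i = (Ω + (Z i)ᵀ * Hm i (ηhat i) * Z i)⁻¹)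
    (L : Fin n → Matrix (Fin r) (Fin r) ℝ)
    (hLlow : ∀ i, ∀ j k : Fin r, j < k → L i j k = 0)
    (hLdiag : ∀ i, ∀ j : Fin r, 0 < L i j j)
    (hchol : ∀ i, L i * (L i)ᵀ = Lam i)
    (btil : Fin n → Fin r → ℝ)
    (lam : (Fin p → ℝ) → Fin n → Fin r → ℝ)
    (hlam : ∀ β i, lam β i = Lam i *ᵥ ((Z i)ᵀ *ᵥ
      (y i - gv i (ηhat i) + Hm i (ηhat i) *ᵥ (ηhat i - X i *ᵥ β))))
    (b : (Fin p → ℝ) → Fin n → Fin r → ℝ)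
    (hb : ∀ β i, b β i = L i *ᵥ btil i + lam β i)
    (η : (Fin p → ℝ) → (i : Fin n) → Fin (ni i) → ℝ)
    (hη : ∀ β i, η β i = X i *ᵥ β + Z i *ᵥ b β i)
    (c0 : ℝ) (c : Fin n → ℝ)
    (ℓ : (Fin p → ℝ) → ℝ)
    (hℓ : ∀ β, ℓ β = -(β ⬝ᵥ β) / (2 * σβ2) + c0
      + ∑ i, ((∑ j, (y i j * η β i j - h i j (η β i j)))
          + (1 / 2) * Real.log Ω.det - (1 / 2) * (b β i ⬝ᵥ (Ω *ᵥ b β i))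
          + Real.log |(L i).det| + c i))
    (β0 : Fin p → ℝ)
    (a : Fin n → Fin r → ℝ)
    (ha : ∀ i, a i = (Z i)ᵀ *ᵥ (y i - gv i (η β0 i)) - Ω *ᵥ b β0 i) :
    HasFDerivAt ℓ
      (dotCLM ((∑ i, (X i)ᵀ *ᵥ
          (y i - gv i (η β0 i) - Hm i (ηhat i) *ᵥ (Z i *ᵥ (Lam i *ᵥ a i))))
        - (1 / σβ2) • β0))
      β0 :=
  gradient_beta_approach1_general n p r ni y X Z h h1 h2 hder Ω hΩsym σβ2 ηhat gv hgv Hm hHm Lam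
    hLam L btil lam hlam b hb η hη c0 c ℓ hℓ β0 a ha
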